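/- Let R and B be finite nonempty families of closed balls in ℝ^d with conv(⋃_{D ∈ R} D) ∩ conv(⋃_{D ∈ B} D) = ∅, and let (r, b) be a closest pair with r ∈ conv(⋃_{D ∈ R} D) and b ∈ conv(⋃_{D ∈ B} D) realizing the distance between the two convex hulls. Then the perpendicular bisector hyperplane h* of the segment rb strictly separates the red balls from the blue balls, its margin min_{D ∈ R ∪ B} dist(D, h*) equals dist(r, b)/2, and every other strictly separating hyperplane has strictly smaller margin; hence the maximum-margin separator of the ball-dataset is unique and equals h*. -/

import Mathlib

/-!
Let `w = b - r`. Since `(r, b)` is a closest pair of the two convex hulls, the red hull lies in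
`⟪w, ·⟫ ≤ ⟪w, r⟫` and the blue hull in `⟪w, ·⟫ ≥ ⟪w, b⟫`, so the bisector `h*` separates the balls
with margin at least `‖w‖ / 2`. Conversely, every ball of a separator `⟪v, ·⟫ = c` with margin `m`
keeps its points at least `m ‖v‖` away from `c` in the value of `⟪v, ·⟫`; these half-space
constraints pass to the convex hulls, so `2 m ‖v‖ ≤ ⟪v, b - r⟫ ≤ ‖v‖ ‖w‖` and `m ≤ ‖w‖ / 2`.
Equality forces equality in Cauchy–Schwarz, i.e. `v` is a positive multiple of `w`, and then
`c` is pinned to the midpoint, so the separator is `h*`.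
-/

open scoped RealInnerProductSpace

/-- The hyperplane `{x : ⟪w, x⟫ = c}`. -/
def hplane (d : ℕ) (w : EuclideanSpace ℝ (Fin d)) (c : ℝ) :
    Set (EuclideanSpace ℝ (Fin d)) :=
  {x | ⟪w, x⟫ = c}

/-- The distance between two subsets of `ℝ^d`. -/
noncomputable def setDist (d : ℕ) (X Y : Set (EuclideanSpace ℝ (Fin d))) : ℝ :=
  sInf (Set.image2 dist X Y)

/-- The margin of a hyperplane `h` w.r.t. a family of closed balls:
`min_{D ∈ F} dist(D, h)`. -/
noncomputable def ballMargin (d : ℕ) (F : Set (EuclideanSpace ℝ (Fin d) × ℝ))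
    (h : Set (EuclideanSpace ℝ (Fin d))) : ℝ :=
  sInf ((fun D : EuclideanSpace ℝ (Fin d) × ℝ =>
    setDist d (Metric.closedBall D.1 D.2) h) '' F)

/-- `(w, c)` strictly separates the red balls `R` from the blue balls `B`. -/
def BallStrictSep (d : ℕ) (R B : Finset (EuclideanSpace ℝ (Fin d) × ℝ))
    (w : EuclideanSpace ℝ (Fin d)) (c : ℝ) : Prop :=
  (∀ D ∈ R, ∀ x ∈ Metric.closedBall D.1 D.2, ⟪w, x⟫ < c) ∧
  ∀ D ∈ B, ∀ y ∈ Metric.closedBall D.1 D.2, c < ⟪w, y⟫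

open Metric

lemma real_inner_sub_nonpos_of_forall_norm_le {F : Type*} [NormedAddCommGroup F]
    [InnerProductSpace ℝ F] {K : Set F} (hK : Convex ℝ K) {u p : F} (hp : p ∈ K)
    (hmin : ∀ z ∈ K, ‖u - p‖ ≤ ‖u - z‖) {x : F} (hx : x ∈ K) : ⟪u - p, x - p⟫ ≤ 0 := by
  have : Nonempty K := ⟨⟨p, hp⟩⟩
  refine (norm_eq_iInf_iff_real_inner_le_zero hK hp).1 (le_antisymm ?_ ?_) x hx
  · exact le_ciInf fun z => hmin z z.2
  · exact ciInf_le (f := fun z : K => ‖u - z‖) ⟨0, Set.forall_mem_range.2 fun _ => norm_nonneg _⟩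
      ⟨p, hp⟩

section

variable {d : ℕ}

lemma hplane_smul {k : ℝ} (hk : k ≠ 0) (w : EuclideanSpace ℝ (Fin d)) (c : ℝ) :
    hplane d (k • w) (k * c) = hplane d w c := by
  ext x
  change ⟪k • w, x⟫ = k * c ↔ ⟪w, x⟫ = c
  rw [real_inner_smul_left]
  exact mul_right_inj' hk

lemma exists_mem_hplane_norm_mul_dist_eq {v : EuclideanSpace ℝ (Fin d)} (hv : v ≠ 0) (c : ℝ)
    (x : EuclideanSpace ℝ (Fin d)) : ∃ y ∈ hplane d v c, ‖v‖ * dist x y = |⟪v, x⟫ - c| := by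
  have hv2 : ‖v‖ ^ 2 ≠ 0 := by positivity
  refine ⟨x + ((c - ⟪v, x⟫) / ‖v‖ ^ 2) • v, ?_, ?_⟩
  · change ⟪v, _⟫ = c
    rw [inner_add_right, real_inner_smul_right, real_inner_self_eq_norm_sq,
      div_mul_cancel₀ _ hv2]
    ring
  · rw [dist_eq_norm, sub_add_cancel_left, norm_neg, norm_smul, Real.norm_eq_abs, abs_div,
      abs_sub_comm, abs_of_nonneg (sq_nonneg ‖v‖)]
    field_simp

lemma hplane_nonempty {v : EuclideanSpace ℝ (Fin d)} (hv : v ≠ 0) (c : ℝ) :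
    (hplane d v c).Nonempty :=
  let ⟨y, hy, _⟩ := exists_mem_hplane_norm_mul_dist_eq hv c 0
  ⟨y, hy⟩

lemma abs_inner_sub_le_norm_mul_dist {v x y : EuclideanSpace ℝ (Fin d)} {c : ℝ}
    (hy : y ∈ hplane d v c) : |⟪v, x⟫ - c| ≤ ‖v‖ * dist x y := by
  calc |⟪v, x⟫ - c| = |⟪v, x - y⟫| := by rw [inner_sub_right, show ⟪v, y⟫ = c from hy]
    _ ≤ ‖v‖ * dist x y := by rw [dist_eq_norm]; exact abs_real_inner_le_norm v (x - y)

lemma setDist_le_dist {X Y : Set (EuclideanSpace ℝ (Fin d))} {x y : EuclideanSpace ℝ (Fin d)}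
    (hx : x ∈ X) (hy : y ∈ Y) : setDist d X Y ≤ dist x y :=
  csInf_le ⟨0, by rintro _ ⟨_, _, _, _, rfl⟩; exact dist_nonneg⟩ (Set.mem_image2_of_mem hx hy)

lemma le_setDist {X Y : Set (EuclideanSpace ℝ (Fin d))} {m : ℝ} (hX : X.Nonempty)
    (hY : Y.Nonempty) (H : ∀ x ∈ X, ∀ y ∈ Y, m ≤ dist x y) : m ≤ setDist d X Y :=
  le_csInf (hX.image2 hY) (by rintro _ ⟨x, hx, y, hy, rfl⟩; exact H x hx y hy)

lemma setDist_hplane_mul_norm_le {X : Set (EuclideanSpace ℝ (Fin d))}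
    {v x : EuclideanSpace ℝ (Fin d)} (hv : v ≠ 0) (c : ℝ) (hx : x ∈ X) :
    setDist d X (hplane d v c) * ‖v‖ ≤ |⟪v, x⟫ - c| := by
  obtain ⟨y, hy, hxy⟩ := exists_mem_hplane_norm_mul_dist_eq hv c x
  rw [← hxy, mul_comm]
  exact mul_le_mul_of_nonneg_left (setDist_le_dist hx hy) (norm_nonneg v)

lemma le_setDist_hplane {X : Set (EuclideanSpace ℝ (Fin d))} {v : EuclideanSpace ℝ (Fin d)}
    {c δ : ℝ} (hX : X.Nonempty) (hv : v ≠ 0) (H : ∀ x ∈ X, δ ≤ |⟪v, x⟫ - c|) :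
    δ / ‖v‖ ≤ setDist d X (hplane d v c) := by
  refine le_setDist hX (hplane_nonempty hv c) fun x hx y hy => ?_
  rw [div_le_iff₀ (norm_pos_iff.2 hv), mul_comm]
  exact (H x hx).trans (abs_inner_sub_le_norm_mul_dist hy)

lemma le_ballMargin {F : Set (EuclideanSpace ℝ (Fin d) × ℝ)} {h : Set (EuclideanSpace ℝ (Fin d))}
    {m : ℝ} (hF : F.Nonempty) (H : ∀ D ∈ F, m ≤ setDist d (closedBall D.1 D.2) h) :
    m ≤ ballMargin d F h :=
  le_csInf (hF.image _) (by rintro _ ⟨D, hD, rfl⟩; exact H D hD)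

lemma ballMargin_hplane_mul_norm_le {F : Set (EuclideanSpace ℝ (Fin d) × ℝ)}
    {D : EuclideanSpace ℝ (Fin d) × ℝ} {v x : EuclideanSpace ℝ (Fin d)} (hF : F.Finite)
    (hD : D ∈ F) (hv : v ≠ 0) (c : ℝ) (hx : x ∈ closedBall D.1 D.2) :
    ballMargin d F (hplane d v c) * ‖v‖ ≤ |⟪v, x⟫ - c| :=
  (mul_le_mul_of_nonneg_right (csInf_le (hF.image _).bddBelow (Set.mem_image_of_mem _ hD))
    (norm_nonneg v)).trans (setDist_hplane_mul_norm_le hv c hx)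

lemma inner_le_inner_of_dist_eq_setDist {K L : Set (EuclideanSpace ℝ (Fin d))}
    (hK : Convex ℝ K) (hL : Convex ℝ L) {p q : EuclideanSpace ℝ (Fin d)} (hp : p ∈ K)
    (hq : q ∈ L) (h : dist p q = setDist d K L) :
    (∀ x ∈ K, ⟪q - p, x⟫ ≤ ⟪q - p, p⟫) ∧ ∀ y ∈ L, ⟪q - p, q⟫ ≤ ⟪q - p, y⟫ := by
  constructor
  · intro x hx
    have := real_inner_sub_nonpos_of_forall_norm_le hK hp (u := q)
      (fun z hz => by simpa only [← dist_eq_norm, dist_comm q, h] using setDist_le_dist hz hq) hx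
    rw [inner_sub_right] at this
    linarith
  · intro y hy
    have := real_inner_sub_nonpos_of_forall_norm_le hL hq (u := p)
      (fun z hz => by simpa only [← dist_eq_norm, h] using setDist_le_dist hp hz) hy
    rw [← neg_sub, inner_neg_left, inner_sub_right] at this
    linarith

lemma hplane_eq_bisector {v r b : EuclideanSpace ℝ (Fin d)} {c m : ℝ} (hv : v ≠ 0) (hrb : r ≠ b)
    (hm : dist r b / 2 ≤ m) (hr : ⟪v, r⟫ ≤ c - m * ‖v‖) (hb : c + m * ‖v‖ ≤ ⟪v, b⟫) :
    hplane d v c = hplane d (b - r) ⟪b - r, (1 / 2 : ℝ) • (r + b)⟫ := by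
  have hw : 0 < ‖b - r‖ := norm_pos_iff.2 (sub_ne_zero.2 hrb.symm)
  have hmv : ‖b - r‖ / 2 * ‖v‖ ≤ m * ‖v‖ := by
    rw [← dist_eq_norm, dist_comm]
    exact mul_le_mul_of_nonneg_right hm (norm_nonneg v)
  have hcs : ⟪v, b - r⟫ ≤ ‖v‖ * ‖b - r‖ := real_inner_le_norm v (b - r)
  rw [inner_sub_right] at hcs
  have hpar : ‖b - r‖ • v = ‖v‖ • (b - r) :=
    inner_eq_norm_mul_iff_real.1 (by rw [inner_sub_right]; linarith)
  have hc : c = ⟪v, (1 / 2 : ℝ) • (r + b)⟫ := by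
    rw [real_inner_smul_right, inner_add_right]
    linarith
  obtain ⟨k, hk, rfl⟩ : ∃ k : ℝ, k ≠ 0 ∧ v = k • (b - r) :=
    ⟨‖b - r‖⁻¹ * ‖v‖, by positivity, by rw [mul_smul, ← hpar, inv_smul_smul₀ hw.ne']⟩
  rw [hc, real_inner_smul_left, hplane_smul hk]

section

variable {R B : Finset (EuclideanSpace ℝ (Fin d) × ℝ)} {v : EuclideanSpace ℝ (Fin d)} {c : ℝ}

lemma BallStrictSep.inner_le_sub_ballMargin (hsep : BallStrictSep d R B v c) (hv : v ≠ 0)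
    {x : EuclideanSpace ℝ (Fin d)} (hx : x ∈ convexHull ℝ (⋃ D ∈ R, closedBall D.1 D.2)) :
    ⟪v, x⟫ ≤ c - ballMargin d (↑R ∪ ↑B) (hplane d v c) * ‖v‖ := by
  refine convexHull_min ?_ (convex_halfSpace_le (innerₛₗ ℝ v).isLinear _) hx
  simp only [Set.iUnion_subset_iff]
  intro D hD y hy
  have := ballMargin_hplane_mul_norm_le (R.finite_toSet.union B.finite_toSet)
    (Or.inl hD) hv c hy
  rw [abs_of_neg (sub_neg.2 (hsep.1 D hD y hy))] at this
  change ⟪v, y⟫ ≤ _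
  linarith

lemma BallStrictSep.add_ballMargin_le_inner (hsep : BallStrictSep d R B v c) (hv : v ≠ 0)
    {y : EuclideanSpace ℝ (Fin d)} (hy : y ∈ convexHull ℝ (⋃ D ∈ B, closedBall D.1 D.2)) :
    c + ballMargin d (↑R ∪ ↑B) (hplane d v c) * ‖v‖ ≤ ⟪v, y⟫ := by
  refine convexHull_min ?_ (convex_halfSpace_ge (innerₛₗ ℝ v).isLinear _) hy
  simp only [Set.iUnion_subset_iff]
  intro D hD x hx
  have := ballMargin_hplane_mul_norm_le (R.finite_toSet.union B.finite_toSet)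
    (Or.inr hD) hv c hx
  rw [abs_of_pos (sub_pos.2 (hsep.2 D hD x hx))] at this
  change _ ≤ ⟪v, x⟫
  linarith

lemma BallStrictSep.ballMargin_le_dist_div_two (hsep : BallStrictSep d R B v c) (hv : v ≠ 0)
    {r b : EuclideanSpace ℝ (Fin d)} (hr : r ∈ convexHull ℝ (⋃ D ∈ R, closedBall D.1 D.2))
    (hb : b ∈ convexHull ℝ (⋃ D ∈ B, closedBall D.1 D.2)) :
    ballMargin d (↑R ∪ ↑B) (hplane d v c) ≤ dist r b / 2 := by
  have hcs : ⟪v, b⟫ - ⟪v, r⟫ ≤ ‖v‖ * dist r b := by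
    rw [← inner_sub_right, dist_comm, dist_eq_norm]
    exact real_inner_le_norm v (b - r)
  have := hsep.inner_le_sub_ballMargin hv hr
  have := hsep.add_ballMargin_le_inner hv hb
  have hmv : ballMargin d (↑R ∪ ↑B) (hplane d v c) * ‖v‖ ≤ dist r b / 2 * ‖v‖ := by linarith
  exact le_of_mul_le_mul_right hmv (norm_pos_iff.2 hv)

end

lemma inner_bisector_sub_inner_left (r b : EuclideanSpace ℝ (Fin d)) :
    ⟪b - r, (1 / 2 : ℝ) • (r + b)⟫ - ⟪b - r, r⟫ = ‖b - r‖ ^ 2 / 2 := by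
  rw [← real_inner_self_eq_norm_sq, real_inner_smul_right, inner_add_right, inner_sub_right]
  ring

lemma inner_right_sub_inner_bisector (r b : EuclideanSpace ℝ (Fin d)) :
    ⟪b - r, b⟫ - ⟪b - r, (1 / 2 : ℝ) • (r + b)⟫ = ‖b - r‖ ^ 2 / 2 := by
  rw [← real_inner_self_eq_norm_sq, real_inner_smul_right, inner_add_right, inner_sub_right]
  ring

section

variable {R B : Finset (EuclideanSpace ℝ (Fin d) × ℝ)} {r b : EuclideanSpace ℝ (Fin d)}

lemma ballStrictSep_bisector (hrb : r ≠ b)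
    (hR : ∀ D ∈ R, ∀ x ∈ closedBall D.1 D.2, ⟪b - r, x⟫ ≤ ⟪b - r, r⟫)
    (hB : ∀ D ∈ B, ∀ y ∈ closedBall D.1 D.2, ⟪b - r, b⟫ ≤ ⟪b - r, y⟫) :
    BallStrictSep d R B (b - r) ⟪b - r, (1 / 2 : ℝ) • (r + b)⟫ := by
  have hw : 0 < ‖b - r‖ ^ 2 := by
    have := norm_pos_iff.2 (sub_ne_zero.2 hrb.symm)
    positivity
  have hr := inner_bisector_sub_inner_left r b
  have hb := inner_right_sub_inner_bisector r b
  exact ⟨fun D hD x hx => by linarith [hR D hD x hx], fun D hD y hy => by linarith [hB D hD y hy]⟩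

lemma dist_div_two_le_ballMargin_bisector (hRne : R.Nonempty) (hRrad : ∀ D ∈ R, 0 ≤ D.2)
    (hBrad : ∀ D ∈ B, 0 ≤ D.2) (hrb : r ≠ b)
    (hR : ∀ D ∈ R, ∀ x ∈ closedBall D.1 D.2, ⟪b - r, x⟫ ≤ ⟪b - r, r⟫)
    (hB : ∀ D ∈ B, ∀ y ∈ closedBall D.1 D.2, ⟪b - r, b⟫ ≤ ⟪b - r, y⟫) :
    dist r b / 2 ≤ ballMargin d (↑R ∪ ↑B) (hplane d (b - r) ⟪b - r, (1 / 2 : ℝ) • (r + b)⟫) := by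
  have hw : b - r ≠ 0 := sub_ne_zero.2 hrb.symm
  have hδ : ‖b - r‖ ^ 2 / 2 / ‖b - r‖ = dist r b / 2 := by
    rw [dist_comm, dist_eq_norm]
    field_simp
  have hr := inner_bisector_sub_inner_left r b
  have hb := inner_right_sub_inner_bisector r b
  rw [← hδ]
  refine le_ballMargin ((Finset.coe_nonempty.2 hRne).mono Set.subset_union_left) ?_
  rintro D (hD | hD)
  · refine le_setDist_hplane (nonempty_closedBall.2 (hRrad D hD)) hw fun x hx => ?_
    rw [abs_sub_comm]
    exact le_abs.2 (Or.inl (by linarith [hR D hD x hx]))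
  · refine le_setDist_hplane (nonempty_closedBall.2 (hBrad D hD)) hw fun y hy => ?_
    exact le_abs.2 (Or.inl (by linarith [hB D hD y hy]))

end

end

theorem stmt_18_general (d : ℕ) (R B : Finset (EuclideanSpace ℝ (Fin d) × ℝ))
    (hRne : R.Nonempty)
    (hRrad : ∀ D ∈ R, 0 ≤ D.2) (hBrad : ∀ D ∈ B, 0 ≤ D.2)
    (hdisj : convexHull ℝ (⋃ D ∈ R, Metric.closedBall D.1 D.2) ∩
      convexHull ℝ (⋃ D ∈ B, Metric.closedBall D.1 D.2) = ∅)
    (r b : EuclideanSpace ℝ (Fin d))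
    (hr : r ∈ convexHull ℝ (⋃ D ∈ R, Metric.closedBall D.1 D.2))
    (hb : b ∈ convexHull ℝ (⋃ D ∈ B, Metric.closedBall D.1 D.2))
    (hclosest : dist r b = setDist d
      (convexHull ℝ (⋃ D ∈ R, Metric.closedBall D.1 D.2))
      (convexHull ℝ (⋃ D ∈ B, Metric.closedBall D.1 D.2))) :
    -- `h*` strictly separates the red balls from the blue balls …
    (b - r ≠ 0 ∧ BallStrictSep d R B (b - r) ⟪b - r, (1 / 2 : ℝ) • (r + b)⟫) ∧
    -- … its margin equals `dist r b / 2` …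
    ballMargin d (↑R ∪ ↑B) (hplane d (b - r) ⟪b - r, (1 / 2 : ℝ) • (r + b)⟫) =
      dist r b / 2 ∧
    -- … and every other strictly separating hyperplane has strictly smaller margin.
    ∀ h : Set (EuclideanSpace ℝ (Fin d)),
      (∃ (w : EuclideanSpace ℝ (Fin d)) (c : ℝ), w ≠ 0 ∧ h = hplane d w c ∧
        BallStrictSep d R B w c) →
      h ≠ hplane d (b - r) ⟪b - r, (1 / 2 : ℝ) • (r + b)⟫ →
      ballMargin d (↑R ∪ ↑B) h < dist r b / 2 := by
  have hrb : r ≠ b := fun h => (Set.eq_empty_iff_forall_notMem.1 hdisj) r ⟨hr, h ▸ hb⟩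
  have hw : b - r ≠ 0 := sub_ne_zero.2 hrb.symm
  obtain ⟨hRside, hBside⟩ := inner_le_inner_of_dist_eq_setDist (convex_convexHull ℝ _)
    (convex_convexHull ℝ _) hr hb hclosest
  have hR : ∀ D ∈ R, ∀ x ∈ closedBall D.1 D.2, ⟪b - r, x⟫ ≤ ⟪b - r, r⟫ := fun D hD x hx =>
    hRside x (subset_convexHull ℝ _ (Set.mem_biUnion hD hx))
  have hB : ∀ D ∈ B, ∀ y ∈ closedBall D.1 D.2, ⟪b - r, b⟫ ≤ ⟪b - r, y⟫ := fun D hD y hy =>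
    hBside y (subset_convexHull ℝ _ (Set.mem_biUnion hD hy))
  have hsep := ballStrictSep_bisector hrb hR hB
  refine ⟨⟨hw, hsep⟩, le_antisymm (hsep.ballMargin_le_dist_div_two hw hr hb)
    (dist_div_two_le_ballMargin_bisector hRne hRrad hBrad hrb hR hB), ?_⟩
  rintro _ ⟨v, c, hv, rfl, hsep'⟩ hne
  refine (hsep'.ballMargin_le_dist_div_two hv hr hb).lt_of_ne fun hm => hne ?_
  exact hplane_eq_bisector hv hrb hm.ge (hsep'.inner_le_sub_ballMargin hv hr)
    (hsep'.add_ballMargin_le_inner hv hb)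

/-- Let `R`, `B` be finite nonempty families of closed balls in `ℝ^d`
with disjoint convex hulls of their unions, and let `(r, b)` be a closest pair realizing
the distance between the two convex hulls.  Then the perpendicular bisector `h*` of the
segment `rb` strictly separates the red balls from the blue balls, its margin equals
`dist(r, b)/2`, and every other strictly separating hyperplane has strictly smaller
margin; hence the maximum-margin separator of the ball-dataset is unique and equals
`h*`. -/
theorem stmt_18 (d : ℕ) (R B : Finset (EuclideanSpace ℝ (Fin d) × ℝ))
    (hRne : R.Nonempty) (hBne : B.Nonempty)
    (hRrad : ∀ D ∈ R, 0 ≤ D.2) (hBrad : ∀ D ∈ B, 0 ≤ D.2)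
    (hdisj : convexHull ℝ (⋃ D ∈ R, Metric.closedBall D.1 D.2) ∩
      convexHull ℝ (⋃ D ∈ B, Metric.closedBall D.1 D.2) = ∅)
    (r b : EuclideanSpace ℝ (Fin d))
    (hr : r ∈ convexHull ℝ (⋃ D ∈ R, Metric.closedBall D.1 D.2))
    (hb : b ∈ convexHull ℝ (⋃ D ∈ B, Metric.closedBall D.1 D.2))
    (hclosest : dist r b = setDist d
      (convexHull ℝ (⋃ D ∈ R, Metric.closedBall D.1 D.2))
      (convexHull ℝ (⋃ D ∈ B, Metric.closedBall D.1 D.2))) :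
    -- `h*` strictly separates the red balls from the blue balls …
    (b - r ≠ 0 ∧ BallStrictSep d R B (b - r) ⟪b - r, (1 / 2 : ℝ) • (r + b)⟫) ∧
    -- … its margin equals `dist r b / 2` …
    ballMargin d (↑R ∪ ↑B) (hplane d (b - r) ⟪b - r, (1 / 2 : ℝ) • (r + b)⟫) =
      dist r b / 2 ∧
    -- … and every other strictly separating hyperplane has strictly smaller margin.
    ∀ h : Set (EuclideanSpace ℝ (Fin d)),
      (∃ (w : EuclideanSpace ℝ (Fin d)) (c : ℝ), w ≠ 0 ∧ h = hplane d w c ∧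
        BallStrictSep d R B w c) →
      h ≠ hplane d (b - r) ⟪b - r, (1 / 2 : ℝ) • (r + b)⟫ →
      ballMargin d (↑R ∪ ↑B) h < dist r b / 2 :=
  stmt_18_general d R B hRne hRrad hBrad hdisj r b hr hb hclosest
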